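/- Let m, n ≥ 1, let A be an m×n real matrix, and let x ∈ [0,1]^n. Then there exists x' ∈ [0,1]^n such that Ax' = Ax, ∑_{i=1}^n x'_i = ∑_{i=1}^n x_i, and at most m + 1 entries of x' lie in the open interval (0,1) (all other entries are 0 or 1). -/

import Mathlib

open Finset

-- extension by zero as a linear map
noncomputable def extZero {n : ℕ} (S : Finset (Fin n)) :
    ({i // i ∈ S} → ℝ) →ₗ[ℝ] (Fin n → ℝ) where
  toFun v i := if h : i ∈ S then v ⟨i, h⟩ else 0
  map_add' u v := by funext i; by_cases h : i ∈ S <;> simp [h]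
  map_smul' c v := by funext i; by_cases h : i ∈ S <;> simp [h]

theorem sparsify_step
    (m n : ℕ)
    (A : Matrix (Fin m) (Fin n) ℝ)
    (x : Fin n → ℝ)
    (hx : ∀ i, x i ∈ Set.Icc (0 : ℝ) 1)
    (hcard : m + 1 < {i : Fin n | 0 < x i ∧ x i < 1}.ncard) :
    ∃ x' : Fin n → ℝ,
      (∀ i, x' i ∈ Set.Icc (0 : ℝ) 1) ∧
      A.mulVec x' = A.mulVec x ∧
      (∑ i, x' i = ∑ i, x i) ∧
      {i : Fin n | 0 < x' i ∧ x' i < 1}.ncard < {i : Fin n | 0 < x i ∧ x i < 1}.ncard := by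
  classical
  set S : Finset (Fin n) := Finset.univ.filter (fun i => 0 < x i ∧ x i < 1) with hS
  have hSset : {i : Fin n | 0 < x i ∧ x i < 1} = ↑S := by
    ext i; simp [hS]
  rw [hSset] at hcard ⊢
  have hScard : m + 1 < S.card := by simpa using hcard
  -- the linear map (A·v, ∑ v)
  let σ : (Fin n → ℝ) →ₗ[ℝ] ℝ := ∑ i : Fin n, LinearMap.proj i
  let φ : (Fin n → ℝ) →ₗ[ℝ] (Fin m → ℝ) × ℝ := LinearMap.prod A.mulVecLin σ
  let ψ := φ.comp (extZero S)
  have hnotinj : ¬ Function.Injective ψ := by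
    intro hinj
    have h1 := LinearMap.finrank_le_finrank_of_injective hinj
    have h2 : Module.finrank ℝ ({i // i ∈ S} → ℝ) = S.card := by
      simp [Module.finrank_pi]
    have h3 : Module.finrank ℝ ((Fin m → ℝ) × ℝ) = m + 1 := by
      simp [Module.finrank_pi]
    omega
  obtain ⟨a, b, hab, hne⟩ := Function.not_injective_iff.mp hnotinj
  set w : Fin n → ℝ := extZero S (a - b) with hw
  have hψw : ψ (a - b) = 0 := by rw [map_sub, hab, sub_self]
  have hAw : A.mulVec w = 0 := by
    have := congrArg Prod.fst hψw
    simpa [ψ, φ, w, Matrix.mulVecLin] using this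
  have hsumw : ∑ i, w i = 0 := by
    have := congrArg Prod.snd hψw
    simpa [ψ, φ, σ, w, LinearMap.sum_apply] using this
  have hsupp : ∀ i, w i ≠ 0 → i ∈ S := by
    intro i hi
    by_contra h
    exact hi (by simp [hw, extZero, h])
  have hwne : ∃ i, w i ≠ 0 := by
    by_contra h
    push_neg at h
    apply hne
    funext j
    have := h (j : Fin n)
    have hj : (j : Fin n) ∈ S := j.2
    have : a j - b j = 0 := by simpa [hw, extZero, hj] using this
    linarith
  set T : Finset (Fin n) := Finset.univ.filter (fun i => w i ≠ 0) with hT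
  have hTne : T.Nonempty := by
    obtain ⟨i, hi⟩ := hwne
    exact ⟨i, by simp [hT, hi]⟩
  set c : Fin n → ℝ := fun i => if 0 < w i then (1 - x i) / w i else (-x i) / w i with hc
  have hcpos : ∀ i ∈ T, 0 < c i := by
    intro i hi
    have hwi : w i ≠ 0 := by simpa [hT] using hi
    have hiS := hsupp i hwi
    have hxi : 0 < x i ∧ x i < 1 := by simpa [hS] using hiS
    by_cases hp : 0 < w i
    · simp only [hc, hp, if_pos]
      exact div_pos (by linarith [hxi.2]) hp
    · have hneg : w i < 0 := lt_of_le_of_ne (not_lt.mp hp) hwi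
      simp only [hc, hp, if_neg, not_false_iff]
      exact div_pos_of_neg_of_neg (by linarith [hxi.1]) hneg
  set t : ℝ := T.inf' hTne c with ht
  have htpos : 0 < t := by
    obtain ⟨i0, hi0, heq⟩ := Finset.exists_mem_eq_inf' hTne c
    rw [ht, heq]; exact hcpos i0 hi0
  have htle : ∀ i ∈ T, t ≤ c i := fun i hi => Finset.inf'_le c hi
  set x' : Fin n → ℝ := fun i => x i + t * w i with hx'
  -- key coordinate bounds
  have hbound : ∀ i, w i ≠ 0 → (0 ≤ x' i ∧ x' i ≤ 1) := by
    intro i hwi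
    have hiT : i ∈ T := by simp [hT, hwi]
    have hiS := hsupp i hwi
    have hxi : 0 < x i ∧ x i < 1 := by simpa [hS] using hiS
    have hle := htle i hiT
    by_cases hp : 0 < w i
    · have hci : c i = (1 - x i) / w i := by simp [hc, hp]
      constructor
      · have : 0 < t * w i := mul_pos htpos hp
        simp only [hx']; linarith [hxi.1]
      · have : t * w i ≤ (1 - x i) / w i * w i := by
          exact mul_le_mul_of_nonneg_right (hci ▸ hle) (le_of_lt hp)
        rw [div_mul_cancel₀ _ hwi] at this
        simp only [hx']; linarith
    · have hneg : w i < 0 := lt_of_le_of_ne (not_lt.mp hp) hwi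
      have hci : c i = (-x i) / w i := by simp [hc, hp]
      constructor
      · have : (-x i) / w i * w i ≤ t * w i := by
          exact mul_le_mul_of_nonpos_right (hci ▸ hle) (le_of_lt hneg)
        rw [div_mul_cancel₀ _ hwi] at this
        simp only [hx']; linarith
      · have : t * w i < 0 := mul_neg_of_pos_of_neg htpos hneg
        simp only [hx']; linarith [hxi.2]
  refine ⟨x', ?_, ?_, ?_, ?_⟩
  · intro i
    by_cases hwi : w i = 0
    · simp only [hx', hwi, mul_zero, add_zero]; exact hx i
    · exact ⟨(hbound i hwi).1, (hbound i hwi).2⟩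
  · have : x' = x + t • w := by funext i; simp [hx', smul_eq_mul]
    rw [this, Matrix.mulVec_add, Matrix.mulVec_smul, hAw]
    simp
  · simp only [hx']
    rw [Finset.sum_add_distrib, ← Finset.mul_sum, hsumw, mul_zero, add_zero]
  · -- fractional set strictly decreases
    obtain ⟨i0, hi0, heq⟩ := Finset.exists_mem_eq_inf' hTne c
    have hwi0 : w i0 ≠ 0 := by simpa [hT] using hi0
    have hi0S : i0 ∈ S := hsupp i0 hwi0
    have hxi0 : 0 < x i0 ∧ x i0 < 1 := by simpa [hS] using hi0S
    have hx'i0 : x' i0 = 0 ∨ x' i0 = 1 := by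
      by_cases hp : 0 < w i0
      · right
        have hci : c i0 = (1 - x i0) / w i0 := by simp [hc, hp]
        simp only [hx', ht, heq, hci]
        rw [div_mul_cancel₀ _ hwi0]; ring
      · left
        have hci : c i0 = (-x i0) / w i0 := by simp [hc, hp]
        simp only [hx', ht, heq, hci]
        rw [div_mul_cancel₀ _ hwi0]; ring
    have hsub : {i : Fin n | 0 < x' i ∧ x' i < 1} ⊆ (↑S : Set (Fin n)) \ {i0} := by
      intro i hi
      simp only [Set.mem_setOf_eq] at hi
      constructor
      · by_cases hwi : w i = 0
        · have : x' i = x i := by simp [hx', hwi]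
          rw [this] at hi
          simp [hS, hi.1, hi.2]
        · exact hsupp i hwi
      · intro h
        rw [Set.mem_singleton_iff] at h
        subst h
        rcases hx'i0 with h | h <;> rw [h] at hi <;> linarith [hi.1, hi.2]
    calc {i : Fin n | 0 < x' i ∧ x' i < 1}.ncard
        ≤ ((↑S : Set (Fin n)) \ {i0}).ncard := Set.ncard_le_ncard hsub (Set.Finite.diff (S.finite_toSet))
      _ < (↑S : Set (Fin n)).ncard := by
          apply Set.ncard_lt_ncard _ S.finite_toSet
          constructor
          · exact Set.diff_subset
          · intro hss
            have := hss (Finset.mem_coe.mpr hi0S)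
            simp at this

theorem sparsify_aux
    (m n : ℕ)
    (A : Matrix (Fin m) (Fin n) ℝ) :
    ∀ (k : ℕ) (x : Fin n → ℝ), (∀ i, x i ∈ Set.Icc (0 : ℝ) 1) →
      {i : Fin n | 0 < x i ∧ x i < 1}.ncard ≤ k →
    ∃ x' : Fin n → ℝ,
      (∀ i, x' i ∈ Set.Icc (0 : ℝ) 1) ∧
      A.mulVec x' = A.mulVec x ∧
      (∑ i, x' i = ∑ i, x i) ∧
      {i : Fin n | 0 < x' i ∧ x' i < 1}.ncard ≤ m + 1 := by
  intro k
  induction k with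
  | zero =>
    intro x hx hk
    exact ⟨x, hx, rfl, rfl, by omega⟩
  | succ k ih =>
    intro x hx hk
    by_cases h : {i : Fin n | 0 < x i ∧ x i < 1}.ncard ≤ m + 1
    · exact ⟨x, hx, rfl, rfl, h⟩
    · obtain ⟨x1, hx1, hA1, hs1, hlt⟩ := sparsify_step m n A x hx (by omega)
      obtain ⟨x', hx', hA', hs', hcard'⟩ := ih x1 hx1 (by omega)
      exact ⟨x', hx', by rw [hA', hA1], by rw [hs', hs1], hcard'⟩

/-- **Sparsification of fractional solutions.** For every `m × n` real matrix `A` and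
every `x ∈ [0,1]^n` there is `x' ∈ [0,1]^n` with `Ax' = Ax`, the same coordinate sum,
and at most `m + 1` fractional entries (all other entries being `0` or `1`). -/
theorem sparsify
    (m n : ℕ) (hm : 1 ≤ m) (hn : 1 ≤ n)
    (A : Matrix (Fin m) (Fin n) ℝ)
    (x : Fin n → ℝ)
    (hx : ∀ i, x i ∈ Set.Icc (0 : ℝ) 1) :
    ∃ x' : Fin n → ℝ,
      (∀ i, x' i ∈ Set.Icc (0 : ℝ) 1) ∧
      A.mulVec x' = A.mulVec x ∧
      (∑ i, x' i = ∑ i, x i) ∧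
      {i : Fin n | 0 < x' i ∧ x' i < 1}.ncard ≤ m + 1 ∧
      (∀ i, ¬(0 < x' i ∧ x' i < 1) → x' i = 0 ∨ x' i = 1) := by
  obtain ⟨x', hx', hA', hs', hcard'⟩ := sparsify_aux m n A n x hx
    (le_trans (Set.ncard_le_ncard (Set.subset_univ _) Set.finite_univ)
      (by simp [Set.ncard_univ]))
  refine ⟨x', hx', hA', hs', hcard', ?_⟩
  intro i hi
  rcases hx' i with ⟨h0, h1⟩
  by_cases hz : x' i = 0
  · exact Or.inl hz
  · right
    have hpos : 0 < x' i := lt_of_le_of_ne h0 (Ne.symm hz)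
    by_contra h1'
    exact hi ⟨hpos, lt_of_le_of_ne h1 h1'⟩
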